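/- For all integers m ≥ 0 and 0 ≤ r < p, and every z ≠ 0 with Δ(z) ∉ [−2, 2], one has φ_{mp+r}(z) = j_r(z) · z^{mp/2} · Γ_+(z)^m + ĵ_r(z) · z^{mp/2} · Γ_−(z)^m. (Equations (3.31)/(3.43): the basic representation formula for φ_{mp+r} off the bands.) -/

import Mathlib

open Polynomial Matrix

/-- `ρ_n = (1 - |α_n|²)^{1/2}`. -/
noncomputable def szRho (α : ℕ → ℂ) (n : ℕ) : ℝ := Real.sqrt (1 - ‖α n‖ ^ 2)

/-- The one-step Szegő transfer matrix `A_k(z)`. -/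
noncomputable def SzegoA (α : ℕ → ℂ) (k : ℕ) (z : ℂ) : Matrix (Fin 2) (Fin 2) ℂ :=
  ((szRho α k : ℂ))⁻¹ • !![z, -(starRingEnd ℂ (α k)); -z * α k, 1]

/-- The transfer matrix `T_n(z) = A_{n-1}(z) ⋯ A_0(z)`. -/
noncomputable def SzegoT (α : ℕ → ℂ) : ℕ → ℂ → Matrix (Fin 2) (Fin 2) ℂ
  | 0, _ => 1
  | n + 1, z => SzegoA α n z * SzegoT α n z

/-- The discriminant `Δ(z) = z^{-p/2} tr T_p(z)` (for `p` even, `z ≠ 0`). -/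
noncomputable def SzegoDisc (α : ℕ → ℂ) (p : ℕ) (z : ℂ) : ℂ :=
  (z ^ (p / 2))⁻¹ * (SzegoT α p z).trace

/-- The projection `P₊(z) = (z^{-p/2} T_p(z) - Γ₋ 1)/(Γ₊ - Γ₋)`. -/
noncomputable def SzegoPplus (α : ℕ → ℂ) (p : ℕ) (Γp Γm : ℂ) (z : ℂ) :
    Matrix (Fin 2) (Fin 2) ℂ :=
  (Γp - Γm)⁻¹ • ((z ^ (p / 2))⁻¹ • SzegoT α p z - Γm • (1 : Matrix (Fin 2) (Fin 2) ℂ))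

/-- `a(z) = ½ (sum of the four entries of P₊(z))`. -/
noncomputable def szA (α : ℕ → ℂ) (p : ℕ) (Γp Γm : ℂ) (z : ℂ) : ℂ :=
  (1 / 2) * (SzegoPplus α p Γp Γm z 0 0 + SzegoPplus α p Γp Γm z 0 1 +
    SzegoPplus α p Γp Γm z 1 0 + SzegoPplus α p Γp Γm z 1 1)

/-- `b(z) = ½ ((P₊)₁₁ + (P₊)₁₂ - (P₊)₂₁ - (P₊)₂₂)`. -/
noncomputable def szB (α : ℕ → ℂ) (p : ℕ) (Γp Γm : ℂ) (z : ℂ) : ℂ :=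
  (1 / 2) * (SzegoPplus α p Γp Γm z 0 0 + SzegoPplus α p Γp Γm z 0 1 -
    SzegoPplus α p Γp Γm z 1 0 - SzegoPplus α p Γp Γm z 1 1)

lemma cayley2 (M : Matrix (Fin 2) (Fin 2) ℂ) :
    M * M = M.trace • M - M.det • (1 : Matrix (Fin 2) (Fin 2) ℂ) := by
  ext i j
  fin_cases i <;> fin_cases j <;>
    simp [Matrix.mul_apply, Fin.sum_univ_two, Matrix.trace_fin_two, Matrix.det_fin_two,
      Matrix.one_apply, smul_eq_mul] <;> ring

lemma spec_pow (M P : Matrix (Fin 2) (Fin 2) ℂ) (Γp Γm : ℂ)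
    (hMP : M * P = Γp • P) (hMQ : M * (1 - P) = Γm • (1 - P)) (m : ℕ) :
    M ^ m = Γp ^ m • P + Γm ^ m • (1 - P) := by
  induction m with
  | zero => simp
  | succ m ih =>
      rw [pow_succ', ih, Matrix.mul_add, Matrix.mul_smul, Matrix.mul_smul, hMP, hMQ,
        smul_smul, smul_smul, ← pow_succ, ← pow_succ]

/-- **Equations (3.31)/(3.43).** Off the bands, with `j_r = a φ_r + b ψ_r` and
`ĵ_r = (1-a) φ_r - b ψ_r`, one has
`φ_{mp+r}(z) = j_r(z) z^{mp/2} Γ₊^m + ĵ_r(z) z^{mp/2} Γ₋^m`. -/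
theorem opuc_periodic_representation_formula
    (p : ℕ) (hp : 0 < p) (hpeven : Even p)
    (α : ℕ → ℂ)
    (hα : ∀ n, ‖α n‖ < 1)
    (hper : ∀ n, α (n + p) = α n)
    (φ φs ψ ψs : ℕ → Polynomial ℂ)
    (hφ0 : φ 0 = 1)
    (hφrec : ∀ n, φ (n + 1) =
      C ((szRho α n : ℂ))⁻¹ * (X * φ n - C (starRingEnd ℂ (α n)) * φs n))
    (hφs : ∀ n, ∀ z : ℂ, z ≠ 0 →
      aeval z (φs n) = z ^ n * starRingEnd ℂ (aeval ((starRingEnd ℂ z)⁻¹) (φ n)))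
    (hψ0 : ψ 0 = 1)
    (hψrec : ∀ n, ψ (n + 1) =
      C ((szRho α n : ℂ))⁻¹ * (X * ψ n - C (starRingEnd ℂ (-α n)) * ψs n))
    (hψs : ∀ n, ∀ z : ℂ, z ≠ 0 →
      aeval z (ψs n) = z ^ n * starRingEnd ℂ (aeval ((starRingEnd ℂ z)⁻¹) (ψ n)))
    (m : ℕ) (r : ℕ) (hr : r < p)
    (z : ℂ) (hz : z ≠ 0)
    (hΔ : ¬ ∃ t : ℝ, t ∈ Set.Icc (-2 : ℝ) 2 ∧ SzegoDisc α p z = (t : ℂ))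
    (Γp Γm : ℂ)
    (hΓp : Γp ^ 2 - SzegoDisc α p z * Γp + 1 = 0)
    (hΓm : Γm ^ 2 - SzegoDisc α p z * Γm + 1 = 0)
    (habs : ‖Γm‖ < ‖Γp‖) :
    aeval z (φ (m * p + r)) =
      (szA α p Γp Γm z * aeval z (φ r) + szB α p Γp Γm z * aeval z (ψ r)) *
          z ^ (m * p / 2) * Γp ^ m +
        ((1 - szA α p Γp Γm z) * aeval z (φ r) - szB α p Γp Γm z * aeval z (ψ r)) *
          z ^ (m * p / 2) * Γm ^ m := by
  have hρpos : ∀ k, (0:ℝ) < 1 - ‖α k‖ ^ 2 := fun k => by nlinarith [hα k, norm_nonneg (α k)]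
  have hρC : ∀ k, ((szRho α k : ℝ) : ℂ) ≠ 0 := fun k => by
    simp only [ne_eq, Complex.ofReal_eq_zero, szRho]
    exact (Real.sqrt_pos.mpr (hρpos k)).ne'
  have hρsq : ∀ k, ((szRho α k : ℝ) : ℂ) ^ 2 = ((1 - ‖α k‖ ^ 2 : ℝ) : ℂ) := fun k => by
    rw [← Complex.ofReal_pow]
    norm_cast
    exact Real.sq_sqrt (hρpos k).le
  have hcc : ∀ k, (starRingEnd ℂ) (α k) * α k = ((‖α k‖ ^ 2 : ℝ) : ℂ) := fun k => by
    rw [mul_comm, Complex.mul_conj]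
    norm_cast
    simp [Complex.normSq_eq_norm_sq]
  have hdetA : ∀ k, (SzegoA α k z).det = z := by
    intro k
    rw [SzegoA, Matrix.det_smul, Matrix.det_fin_two_of, Fintype.card_fin]
    have h1 : ((1 - ‖α k‖ ^ 2 : ℝ) : ℂ) ≠ 0 := by
      norm_cast; exact (hρpos k).ne'
    have e : z * 1 - -(starRingEnd ℂ) (α k) * (-z * α k) = z * ((1 - ‖α k‖ ^ 2 : ℝ) : ℂ) := by
      have h := hcc k
      push_cast at h ⊢
      linear_combination (-z) * h
    rw [e, inv_pow, hρsq k, mul_comm z, ← mul_assoc, inv_mul_cancel₀ h1, one_mul]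
  have hdetT : ∀ n, (SzegoT α n z).det = z ^ n := by
    intro n
    induction n with
    | zero => simp [SzegoT]
    | succ n ih =>
        have hT : SzegoT α (n+1) z = SzegoA α n z * SzegoT α n z := rfl
        rw [hT, Matrix.det_mul, hdetA, ih, pow_succ]
        ring
  have hw : ((starRingEnd ℂ) z)⁻¹ ≠ 0 := inv_ne_zero (by simpa using hz)
  have hcw : ((starRingEnd ℂ) (((starRingEnd ℂ) z)⁻¹)) = z⁻¹ := by
    rw [map_inv₀, Complex.conj_conj]
  have hφsrec : ∀ n, aeval z (φs (n + 1)) =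
      ((szRho α n : ℂ))⁻¹ * (aeval z (φs n) - z * α n * aeval z (φ n)) := by
    intro n
    have h1 := hφs (n+1) z hz
    have h2 := hφs n (((starRingEnd ℂ) z)⁻¹) hw
    rw [hcw, inv_inv] at h2
    rw [hφrec n] at h1
    simp only [_root_.map_mul, _root_.map_sub, aeval_X, aeval_C] at h1
    rw [h2] at h1
    simp only [_root_.map_mul, _root_.map_sub, _root_.map_pow, map_inv₀, Complex.conj_conj,
      Complex.conj_ofReal, hcw] at h1
    rw [h1, hφs n z hz]
    simp only [Algebra.algebraMap_self, RingHom.id_apply, map_inv₀, Complex.conj_ofReal,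
      Complex.conj_conj, inv_pow]
    have ha : z ^ (n+1) * z⁻¹ = z ^ n := by
      rw [pow_succ, mul_assoc, mul_inv_cancel₀ hz, mul_one]
    have hb : z ^ (n+1) * (z ^ n)⁻¹ = z := by
      rw [pow_succ, mul_comm (z^n) z, mul_assoc, mul_inv_cancel₀ (pow_ne_zero n hz), mul_one]
    linear_combination ((szRho α n : ℂ))⁻¹ * (starRingEnd ℂ) ((aeval ((starRingEnd ℂ) z)⁻¹) (φ n)) * ha - ((szRho α n : ℂ))⁻¹ * α n * (aeval z) (φ n) * hb
  have hψsrec : ∀ n, aeval z (ψs (n + 1)) =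
      ((szRho α n : ℂ))⁻¹ * (aeval z (ψs n) + z * α n * aeval z (ψ n)) := by
    intro n
    have h1 := hψs (n+1) z hz
    have h2 := hψs n (((starRingEnd ℂ) z)⁻¹) hw
    rw [hcw, inv_inv] at h2
    rw [hψrec n] at h1
    simp only [_root_.map_mul, _root_.map_sub, _root_.map_neg, aeval_X, aeval_C] at h1
    rw [h2] at h1
    simp only [_root_.map_mul, _root_.map_sub, _root_.map_neg, _root_.map_pow, map_inv₀,
      Complex.conj_conj, Complex.conj_ofReal, hcw] at h1
    rw [h1, hψs n z hz]
    simp only [Algebra.algebraMap_self, RingHom.id_apply, map_inv₀, Complex.conj_ofReal,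
      Complex.conj_conj, inv_pow]
    have ha : z ^ (n+1) * z⁻¹ = z ^ n := by
      rw [pow_succ, mul_assoc, mul_inv_cancel₀ hz, mul_one]
    have hb : z ^ (n+1) * (z ^ n)⁻¹ = z := by
      rw [pow_succ, mul_comm (z^n) z, mul_assoc, mul_inv_cancel₀ (pow_ne_zero n hz), mul_one]
    linear_combination ((szRho α n : ℂ))⁻¹ * (starRingEnd ℂ) ((aeval ((starRingEnd ℂ) z)⁻¹) (ψ n)) * ha + ((szRho α n : ℂ))⁻¹ * α n * (aeval z) (ψ n) * hb
  have hφs0 : aeval z (φs 0) = 1 := by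
    rw [hφs 0 z hz, hφ0]; simp
  have hψs0 : aeval z (ψs 0) = 1 := by
    rw [hψs 0 z hz, hψ0]; simp
  have hφev : ∀ n, aeval z (φ (n + 1)) = ((szRho α n : ℂ))⁻¹ *
      (z * aeval z (φ n) - (starRingEnd ℂ) (α n) * aeval z (φs n)) := by
    intro n
    rw [hφrec n]
    simp only [_root_.map_mul, _root_.map_sub, aeval_X, aeval_C, Algebra.algebraMap_self,
      RingHom.id_apply]
  have hψev : ∀ n, aeval z (ψ (n + 1)) = ((szRho α n : ℂ))⁻¹ *
      (z * aeval z (ψ n) + (starRingEnd ℂ) (α n) * aeval z (ψs n)) := by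
    intro n
    rw [hψrec n]
    simp only [_root_.map_mul, _root_.map_sub, _root_.map_neg, aeval_X, aeval_C,
      Algebra.algebraMap_self, RingHom.id_apply]
    ring
  have key : ∀ n, aeval z (φ n) = SzegoT α n z 0 0 + SzegoT α n z 0 1 ∧
      aeval z (φs n) = SzegoT α n z 1 0 + SzegoT α n z 1 1 ∧
      aeval z (ψ n) = SzegoT α n z 0 0 - SzegoT α n z 0 1 ∧
      aeval z (ψs n) = -(SzegoT α n z 1 0 - SzegoT α n z 1 1) := by
    intro n
    induction n with
    | zero =>
        simp [SzegoT, hφ0, hψ0, hφs0, hψs0, Matrix.one_apply]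
    | succ n ih =>
        obtain ⟨i1, i2, i3, i4⟩ := ih
        have hT : SzegoT α (n+1) z = SzegoA α n z * SzegoT α n z := rfl
        refine ⟨?_, ?_, ?_, ?_⟩ <;>
          rw [hT] <;>
          simp only [SzegoA, Matrix.mul_apply, Fin.sum_univ_two, Matrix.smul_apply,
            smul_eq_mul, Matrix.cons_val', Matrix.cons_val_zero, Matrix.cons_val_one,
            Matrix.head_cons, Matrix.empty_val', Matrix.cons_val_fin_one, Matrix.head_fin_const,
            Matrix.of_apply]
        · rw [hφev n, i1, i2]; ring
        · rw [hφsrec n, i1, i2]; ring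
        · rw [hψev n, i3, i4]; ring
        · rw [hψsrec n, i3, i4]; ring
  have hAper : ∀ n, SzegoA α (n + p) z = SzegoA α n z := by
    intro n; simp [SzegoA, szRho, hper n]
  have hTper : ∀ n, SzegoT α (n + p) z = SzegoT α n z * SzegoT α p z := by
    intro n
    induction n with
    | zero => rw [Nat.zero_add]; exact (Matrix.one_mul _).symm
    | succ n ih =>
        have e : n + 1 + p = (n + p) + 1 := by omega
        have hT : SzegoT α ((n+p)+1) z = SzegoA α (n+p) z * SzegoT α (n+p) z := rfl
        have hT2 : SzegoT α (n+1) z = SzegoA α n z * SzegoT α n z := rfl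
        rw [e, hT, ih, hAper n, hT2, Matrix.mul_assoc]
  have hTsplit : ∀ (M r' : ℕ), SzegoT α (M * p + r') z = SzegoT α r' z * (SzegoT α p z) ^ M := by
    intro M r'
    induction M with
    | zero => simp
    | succ k ih =>
        have e : (k + 1) * p + r' = (k * p + r') + p := by ring
        rw [e, hTper, ih, pow_succ, Matrix.mul_assoc]
  -- spectral part
  set q := p / 2 with hqdef
  have hq2 : 2 * q = p := Nat.two_mul_div_two_of_even hpeven
  have hzq : z ^ q ≠ 0 := pow_ne_zero _ hz
  obtain ⟨M, hM⟩ : ∃ M : Matrix (Fin 2) (Fin 2) ℂ, M = (z ^ q)⁻¹ • SzegoT α p z := ⟨_, rfl⟩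
  have hTpM : SzegoT α p z = (z ^ q) • M := by
    rw [hM, smul_smul, mul_inv_cancel₀ hzq, one_smul]
  have htrM : M.trace = SzegoDisc α p z := by
    rw [hM, Matrix.trace_smul, SzegoDisc, smul_eq_mul]
  have hdetM : M.det = 1 := by
    rw [hM, Matrix.det_smul, hdetT p, Fintype.card_fin, inv_pow, ← pow_mul, mul_comm q 2, hq2,
      inv_mul_cancel₀ (pow_ne_zero _ hz)]
  have hCH : M * M = SzegoDisc α p z • M - (1 : Matrix (Fin 2) (Fin 2) ℂ) := by
    rw [cayley2 M, htrM, hdetM, one_smul]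
  have hΓne : Γp - Γm ≠ 0 := sub_ne_zero.mpr (by rintro rfl; exact absurd habs (lt_irrefl _))
  have hsum : Γp + Γm = SzegoDisc α p z := by
    have h0 : (Γp - Γm) * (Γp + Γm - SzegoDisc α p z) = 0 := by linear_combination hΓp - hΓm
    rcases mul_eq_zero.mp h0 with h | h
    · exact absurd h hΓne
    · exact sub_eq_zero.mp h
  have hprod : Γp * Γm = 1 := by linear_combination -hΓp + Γp * hsum
  obtain ⟨P, hP⟩ : ∃ P, P = SzegoPplus α p Γp Γm z := ⟨_, rfl⟩
  have hPeq : P = (Γp - Γm)⁻¹ • (M - Γm • (1 : Matrix (Fin 2) (Fin 2) ℂ)) := by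
    rw [hP, hM, SzegoPplus, hqdef]
  have hMP : M * P = Γp • P := by
    rw [hPeq, Matrix.mul_smul, mul_sub, Matrix.mul_smul, mul_one, hCH, ← hsum]
    have h1 : (Γp + Γm) • M - (1 : Matrix (Fin 2) (Fin 2) ℂ) - Γm • M
        = Γp • (M - Γm • (1 : Matrix (Fin 2) (Fin 2) ℂ)) := by
      rw [smul_sub, smul_smul, hprod, one_smul, add_smul]; abel
    rw [h1, smul_comm]
  have hMQ : M * (1 - P) = Γm • (1 - P) := by
    have hPM : (Γp - Γm) • P = M - Γm • (1 : Matrix (Fin 2) (Fin 2) ℂ) := by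
      rw [hPeq, smul_smul, mul_inv_cancel₀ hΓne, one_smul]
    have h2 : M = (Γp - Γm) • P + Γm • (1 : Matrix (Fin 2) (Fin 2) ℂ) :=
      sub_eq_iff_eq_add.mp hPM.symm
    rw [mul_sub, mul_one, hMP, smul_sub, h2, sub_smul]
    abel
  have hMm := spec_pow M P Γp Γm hMP hMQ m
  obtain ⟨k1, -, -, -⟩ := key (m * p + r)
  obtain ⟨j1, -, j3, -⟩ := key r
  have hS : SzegoT α (m * p + r) z
      = SzegoT α r z * ((z ^ q) ^ m • (Γp ^ m • P + Γm ^ m • (1 - P))) := by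
    rw [hTsplit m r, hTpM, _root_.smul_pow, hMm]
  have hexp : z ^ (m * p / 2) = (z ^ q) ^ m := by
    rw [← pow_mul]
    congr 1
    have h : m * p = q * m * 2 := by rw [← hq2]; ring
    rw [h, Nat.mul_div_cancel _ (by norm_num)]
  rw [k1, hS, hexp, j1, j3]
  simp only [szA, szB, ← hP, Matrix.mul_apply, Fin.sum_univ_two, Matrix.smul_apply,
    Matrix.add_apply, Matrix.sub_apply, Matrix.one_apply_eq, Matrix.one_apply_ne,
    smul_eq_mul, Matrix.one_apply, if_true, Fin.isValue]
  norm_num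
  ring
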